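/- Let α, τ ∈ ℝ and let u, v : ℝ × ℝ → ℝ be smooth functions solving the Whitham–Broer–Kaup system at every (x,t) ∈ ℝ². Then at every (x,t) ∈ ℝ²: ∂ₜ(uv) + ∂ₓ(u²v − αu·∂ₓv + α·(∂ₓu)·v + ½v² + τu·∂ₓₓu − ½τ·(∂ₓu)²) = 0. -/

import Mathlib

/-- Partial derivative with respect to the first (space) variable. -/
noncomputable def px (f : ℝ → ℝ → ℝ) : ℝ → ℝ → ℝ := fun x t => deriv (fun y => f y t) x

/-- Partial derivative with respect to the second (time) variable. -/
noncomputable def pt (f : ℝ → ℝ → ℝ) : ℝ → ℝ → ℝ := fun x t => deriv (fun s => f x s) t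

/-- Smoothness of a function of two real variables. -/
def Smooth2 (f : ℝ → ℝ → ℝ) : Prop := ContDiff ℝ (⊤ : ℕ∞) (Function.uncurry f)

/-- Residual of the first Whitham–Broer–Kaup equation:
`u_t + u u_x + v_x + α u_xx`. -/
noncomputable def wbk1 (α : ℝ) (u v : ℝ → ℝ → ℝ) : ℝ → ℝ → ℝ :=
  fun x t => pt u x t + u x t * px u x t + px v x t + α * px (px u) x t

/-- Residual of the second Whitham–Broer–Kaup equation:
`v_t + (u v)_x + τ u_xxx − α v_xx`. -/
noncomputable def wbk2 (α τ : ℝ) (u v : ℝ → ℝ → ℝ) : ℝ → ℝ → ℝ :=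
  fun x t => pt v x t + px (fun a b => u a b * v a b) x t
    + τ * px (px (px u)) x t - α * px (px v) x t

/-- The Whitham–Broer–Kaup system holds at every point of `ℝ²`. -/
def WBK (α τ : ℝ) (u v : ℝ → ℝ → ℝ) : Prop :=
  ∀ x t : ℝ, wbk1 α u v x t = 0 ∧ wbk2 α τ u v x t = 0

lemma px_eq_fderiv {f : ℝ → ℝ → ℝ} (hf : Smooth2 f) (x t : ℝ) :
    px f x t = fderiv ℝ (Function.uncurry f) (x, t) (1, 0) := by
  have hF := (hf.differentiable (by simp) (x, t)).hasFDerivAt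
  have hg : HasDerivAt (fun y : ℝ => (y, t)) ((1 : ℝ), (0 : ℝ)) x :=
    HasDerivAt.prodMk (hasDerivAt_id x) (hasDerivAt_const x t)
  have h1 : HasDerivAt (fun y => f y t) (fderiv ℝ (Function.uncurry f) (x, t) (1, 0)) x :=
    (hF.comp_hasDerivAt x hg :)
  exact h1.deriv

lemma Smooth2.px' {f : ℝ → ℝ → ℝ} (hf : Smooth2 f) : Smooth2 (px f) := by
  have he : Function.uncurry (px f)
      = fun p : ℝ × ℝ => fderiv ℝ (Function.uncurry f) p (1, 0) := by
    funext p
    cases p with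
    | mk a b => exact px_eq_fderiv hf a b
  rw [Smooth2, he]
  exact (hf.fderiv_right (by simp)).clm_apply contDiff_const

lemma hasDerivAt_px {f : ℝ → ℝ → ℝ} (hf : Smooth2 f) (x t : ℝ) :
    HasDerivAt (fun y => f y t) (px f x t) x := by
  have hd : DifferentiableAt ℝ (fun y => f y t) x := by
    have := ((hf.differentiable (by simp)).comp
      ((Differentiable.prodMk differentiable_id (differentiable_const t)))) x
    exact this
  exact hd.hasDerivAt

lemma hasDerivAt_pt {f : ℝ → ℝ → ℝ} (hf : Smooth2 f) (x t : ℝ) :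
    HasDerivAt (fun s => f x s) (pt f x t) t := by
  have hd : DifferentiableAt ℝ (fun s => f x s) t := by
    have := ((hf.differentiable (by simp)).comp
      ((Differentiable.prodMk (differentiable_const x) differentiable_id))) t
    exact this
  exact hd.hasDerivAt

/-- Third local conservation law of Theorem 7, with conserved density `u v`. -/
theorem wbk_conservation_law_uv (α τ : ℝ) (u v : ℝ → ℝ → ℝ)
    (hu : Smooth2 u) (hv : Smooth2 v) (h : WBK α τ u v) (x t : ℝ) :
    pt (fun a b => u a b * v a b) x t
      + px (fun a b => (u a b) ^ 2 * v a b - α * u a b * px v a b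
          + α * px u a b * v a b + (1 / 2) * (v a b) ^ 2
          + τ * u a b * px (px u) a b - (1 / 2) * τ * (px u a b) ^ 2) x t = 0 := by
  have hu1 : Smooth2 (px u) := hu.px'
  have hu2 : Smooth2 (px (px u)) := hu1.px'
  have hv1 : Smooth2 (px v) := hv.px'
  have Hu := hasDerivAt_px hu x t
  have Hv := hasDerivAt_px hv x t
  have Hux := hasDerivAt_px hu1 x t
  have Huxx := hasDerivAt_px hu2 x t
  have Hvx := hasDerivAt_px hv1 x t
  have Hut := hasDerivAt_pt hu x t
  have Hvt := hasDerivAt_pt hv x t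
  -- time derivative of the density
  have e1 : pt (fun a b => u a b * v a b) x t = pt u x t * v x t + u x t * pt v x t :=
    (Hut.mul Hvt).deriv
  -- space derivative of u v (appearing in wbk2)
  have e3 : px (fun a b => u a b * v a b) x t = px u x t * v x t + u x t * px v x t :=
    (Hu.mul Hv).deriv
  -- space derivative of the flux
  have T1 := (Hu.pow 2).mul Hv
  have T2 := (Hu.const_mul α).mul Hvx
  have T3 := (Hux.const_mul α).mul Hv
  have T4 := (Hv.pow 2).const_mul ((1:ℝ)/2)
  have T5 := (Hu.const_mul τ).mul Huxx
  have T6 := (Hux.pow 2).const_mul ((1:ℝ)/2 * τ)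
  have H := ((((T1.sub T2).add T3).add T4).add T5).sub T6
  have e2 := H.deriv
  have e2' : px (fun a b => (u a b) ^ 2 * v a b - α * u a b * px v a b
          + α * px u a b * v a b + (1 / 2) * (v a b) ^ 2
          + τ * u a b * px (px u) a b - (1 / 2) * τ * (px u a b) ^ 2) x t
      = deriv (fun y => u y t ^ 2 * v y t - α * u y t * px v y t
          + α * px u y t * v y t + 1 / 2 * v y t ^ 2
          + τ * u y t * px (px u) y t - 1 / 2 * τ * px u y t ^ 2) x := rfl
  obtain ⟨h1, h2⟩ := h x t
  simp only [wbk1] at h1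
  simp only [wbk2] at h2
  rw [e3] at h2
  rw [e1, e2', show deriv (fun y => u y t ^ 2 * v y t - α * u y t * px v y t
          + α * px u y t * v y t + 1 / 2 * v y t ^ 2
          + τ * u y t * px (px u) y t - 1 / 2 * τ * px u y t ^ 2) x = _ from e2]
  simp only [Pi.pow_apply]
  linear_combination v x t * h1 + u x t * h2
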